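/- For all α, β > 0 the first moment of the Bessel distribution is ∫_{[0,∞)} x m_{α,β}(dx) = α/β. -/

import Mathlib

open MeasureTheory Filter Set
open scoped ENNReal

/-- The modified Bessel function of the first kind of order one,
`I₁(r) = (r/2) Σ_{k=0}^∞ (r²/4)^k / (k!(k+1)!)`. -/
noncomputable def besselI1 (r : ℝ) : ℝ :=
  r / 2 * ∑' k : ℕ, (r ^ 2 / 4) ^ k / ((Nat.factorial k : ℝ) * (Nat.factorial (k + 1) : ℝ))

/-- The Bessel distribution `m_{α,β}` on `[0,∞)`:
`m_{α,β}(dx) = e^{−α} δ₀(dx) + β e^{−α−βx} √(α/(βx)) I₁(2√(αβx)) dx`. -/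
noncomputable def besselMeasure (α β : ℝ) : Measure ℝ :=
  ENNReal.ofReal (Real.exp (-α)) • Measure.dirac (0 : ℝ) +
    MeasureTheory.volume.withDensity fun x =>
      ENNReal.ofReal (Set.indicator (Set.Ioi (0 : ℝ))
        (fun x => β * Real.exp (-α - β * x) * Real.sqrt (α / (β * x)) *
          besselI1 (2 * Real.sqrt (α * β * x))) x)


/-!
On `(0, ∞)` the power series of `I₁` turns `x` times the density of `m_{α,β}` into
`e^{-α} Σ_k α^{k+1} β^{k+1} x^{k+1} e^{-βx} / (k! (k+1)!)`. Integrating term by term with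
`∫₀^∞ x^{k+1} e^{-βx} dx = (k+1)! / β^{k+2}` leaves `(e^{-α} / β) Σ_k α^{k+1} / k! = α / β`;
the atom at `0` contributes nothing to the first moment.
-/

open Real Nat

noncomputable def besselI1Series (t : ℝ) : ℝ :=
  ∑' k : ℕ, t ^ k / ((k ! : ℝ) * ((k + 1)! : ℝ))

lemma summable_besselI1Series (t : ℝ) :
    Summable fun k : ℕ => t ^ k / ((k ! : ℝ) * ((k + 1)! : ℝ)) := by
  refine .of_norm_bounded (Real.summable_pow_div_factorial |t|) fun k => ?_
  rw [norm_div, norm_pow, Real.norm_eq_abs, norm_of_nonneg (by positivity)]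
  gcongr
  exact le_mul_of_one_le_right (by positivity) (mod_cast (k + 1).factorial_pos)

@[fun_prop]
lemma measurable_besselI1Series : Measurable besselI1Series :=
  measurable_of_tendsto_metrizable
    (fun n => Finset.measurable_sum (Finset.range n) fun k _ =>
      (measurable_id.pow_const k).div_const _)
    (tendsto_pi_nhds.2 fun t => (summable_besselI1Series t).hasSum.tendsto_sum_nat)

lemma besselI1_eq (r : ℝ) : besselI1 r = r / 2 * besselI1Series (r ^ 2 / 4) := rfl

@[fun_prop]
lemma measurable_besselI1 : Measurable besselI1 := by
  simp only [funext besselI1_eq]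
  fun_prop

lemma besselI1_two_mul_sqrt {t : ℝ} (ht : 0 ≤ t) :
    besselI1 (2 * √t) = √t * besselI1Series t := by
  rw [besselI1_eq, mul_pow, sq_sqrt ht]
  ring_nf

lemma lintegral_pow_mul_exp_neg_mul_Ioi (n : ℕ) {b : ℝ} (hb : 0 < b) :
    ∫⁻ x in Ioi (0 : ℝ), ENNReal.ofReal (x ^ n * exp (-(b * x)))
      = ENNReal.ofReal (n ! / b ^ (n + 1)) := by
  have h := integral_rpow_mul_exp_neg_mul_Ioi (a := n + 1) (by positivity) hb
  simp only [add_sub_cancel_right, rpow_natCast] at h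
  rw [← ofReal_integral_eq_lintegral_ofReal, h]
  · rw [Real.Gamma_nat_eq_factorial, ← Nat.cast_succ, rpow_natCast, div_pow, one_pow,
      one_div_mul_eq_div]
  · have h := integrableOn_rpow_mul_exp_neg_mul_rpow (s := n) (p := 1)
      (by linarith [n.cast_nonneg (α := ℝ)]) one_pos hb
    simp only [rpow_natCast, rpow_one, neg_mul] at h
    exact h
  · filter_upwards [ae_restrict_mem measurableSet_Ioi] with x (hx : 0 < x)
    positivity

lemma integral_id_smul_dirac_add_withDensity_indicator_Ioi (c : ℝ≥0∞) {f : ℝ → ℝ}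
    (hf : Measurable f) :
    ∫ x, x ∂(c • Measure.dirac 0 +
        volume.withDensity fun x => ENNReal.ofReal ((Ioi 0).indicator f x))
      = (∫⁻ x in Ioi 0, ENNReal.ofReal (f x * x)).toReal := by
  set ρ : ℝ → ℝ≥0∞ := fun x => ENNReal.ofReal ((Ioi 0).indicator f x)
  have hρ : Measurable ρ := (hf.indicator measurableSet_Ioi).ennreal_ofReal
  have h_nonneg : ∀ᵐ x ∂(c • Measure.dirac 0 + volume.withDensity ρ), 0 ≤ x := by
    rw [ae_add_measure_iff, ae_withDensity_iff hρ]
    refine ⟨Measure.ae_smul_measure ((ae_dirac_iff measurableSet_Ici).2 le_rfl) c,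
      ae_of_all _ fun x hx => ?_⟩
    by_contra! h
    exact hx (by simp [ρ, indicator_of_notMem (show x ∉ Ioi 0 from not_lt.2 h.le)])
  have h_density : ∀ x, ρ x * ENNReal.ofReal x
      = (Ioi 0).indicator (fun x => ENNReal.ofReal (f x * x)) x := by
    intro x
    by_cases hx : x ∈ Ioi 0
    · simp [ρ, hx, ENNReal.ofReal_mul' (mem_Ioi.1 hx).le]
    · simp [ρ, hx]
  rw [integral_eq_lintegral_of_nonneg_ae h_nonneg aestronglyMeasurable_id,
    lintegral_add_measure, lintegral_smul_measure, lintegral_dirac, ENNReal.ofReal_zero,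
    smul_zero, zero_add, lintegral_withDensity_eq_lintegral_mul _ hρ ENNReal.measurable_ofReal,
    ← lintegral_indicator measurableSet_Ioi]
  simp only [Pi.mul_apply, h_density]

noncomputable def besselDensity (α β x : ℝ) : ℝ :=
  β * exp (-α - β * x) * √(α / (β * x)) * besselI1 (2 * √(α * β * x))

lemma besselMeasure_eq (α β : ℝ) :
    besselMeasure α β = ENNReal.ofReal (exp (-α)) • Measure.dirac 0 +
      volume.withDensity fun x => ENNReal.ofReal ((Ioi 0).indicator (besselDensity α β) x) :=
  rfl

lemma measurable_besselDensity (α β : ℝ) : Measurable (besselDensity α β) := by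
  unfold besselDensity
  fun_prop

lemma hasSum_besselDensity_mul_self {α β x : ℝ} (hα : 0 ≤ α) (hβ : 0 < β) (hx : 0 < x) :
    HasSum (fun k : ℕ => exp (-α) * α * β * (α * β) ^ k / ((k ! : ℝ) * ((k + 1)! : ℝ)) *
      (x ^ (k + 1) * exp (-(β * x)))) (besselDensity α β x * x) := by
  have h_sqrt : √(α / (β * x)) * √(α * β * x) = α := by
    rw [← sqrt_mul (by positivity), show α / (β * x) * (α * β * x) = α ^ 2 by field_simp,
      sqrt_sq hα]
  have h_exp : exp (-α - β * x) = exp (-α) * exp (-(β * x)) := by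
    rw [← exp_add, sub_eq_add_neg]
  have h_density : besselDensity α β x * x
      = exp (-α) * α * β * x * exp (-(β * x)) * besselI1Series (α * β * x) := by
    rw [besselDensity, besselI1_two_mul_sqrt (by positivity), h_exp]
    linear_combination β * exp (-α) * exp (-(β * x)) * x * besselI1Series (α * β * x) * h_sqrt
  rw [h_density]
  refine ((summable_besselI1Series (α * β * x)).hasSum.mul_left
    (exp (-α) * α * β * x * exp (-(β * x)))).congr_fun fun k => ?_
  ring

lemma hasSum_pow_div_factorial (x : ℝ) : HasSum (fun n : ℕ => x ^ n / n !) (exp x) :=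
  Real.exp_eq_exp_ℝ ▸ NormedSpace.expSeries_div_hasSum_exp x

lemma lintegral_besselDensity_mul_self {α β : ℝ} (hα : 0 ≤ α) (hβ : 0 < β) :
    ∫⁻ x in Ioi 0, ENNReal.ofReal (besselDensity α β x * x) = ENNReal.ofReal (α / β) := by
  set a : ℕ → ℝ := fun k => exp (-α) * α * β * (α * β) ^ k / ((k ! : ℝ) * ((k + 1)! : ℝ))
  have ha : ∀ k, 0 ≤ a k := fun k => by positivity
  have h_coeff : ∀ k : ℕ, a k * ((k + 1)! / β ^ (k + 2)) = exp (-α) * α / β * (α ^ k / k !) := by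
    intro k
    simp only [a]
    field_simp
    ring
  calc ∫⁻ x in Ioi 0, ENNReal.ofReal (besselDensity α β x * x)
      = ∫⁻ x in Ioi 0, ∑' k : ℕ,
          ENNReal.ofReal (a k) * ENNReal.ofReal (x ^ (k + 1) * exp (-(β * x))) := by
        refine setLIntegral_congr_fun measurableSet_Ioi fun x (hx : 0 < x) => ?_
        have h := hasSum_besselDensity_mul_self hα hβ hx
        rw [← h.tsum_eq, ENNReal.ofReal_tsum_of_nonneg (fun k => by positivity) h.summable]
        simp only [ENNReal.ofReal_mul (ha _), a]
    _ = ∑' k : ℕ, ENNReal.ofReal (a k) * ENNReal.ofReal ((k + 1)! / β ^ (k + 2)) := by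
        rw [lintegral_tsum fun k => by fun_prop]
        simp only [lintegral_const_mul' _ _ ENNReal.ofReal_ne_top,
          lintegral_pow_mul_exp_neg_mul_Ioi _ hβ]
    _ = ENNReal.ofReal (∑' k : ℕ, exp (-α) * α / β * (α ^ k / k !)) := by
        rw [ENNReal.ofReal_tsum_of_nonneg (fun k => by positivity)
          ((hasSum_pow_div_factorial α).summable.mul_left _)]
        simp only [← ENNReal.ofReal_mul (ha _), h_coeff]
    _ = ENNReal.ofReal (α / β) := by
        rw [tsum_mul_left, (hasSum_pow_div_factorial α).tsum_eq, exp_neg]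
        field_simp

theorem bessel_first_moment (α β : ℝ) (hα : 0 < α) (hβ : 0 < β) :
    ∫ x, x ∂ besselMeasure α β = α / β := by
  rw [besselMeasure_eq, integral_id_smul_dirac_add_withDensity_indicator_Ioi _
    (measurable_besselDensity α β), lintegral_besselDensity_mul_self hα.le hβ,
    ENNReal.toReal_ofReal (by positivity)]
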